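/- For every braid β ∈ B_n, writing SGE(β) = (M, π), every entry of M − Mᵀ above the diagonal lies in {0, 1}: for all i < j, (M − Mᵀ)[i, j] ∈ {0, 1}. -/

import Mathlib

/-- The braid relations. -/
def braidRels (n : ℕ) : Set (FreeGroup (Fin (n - 1))) :=
  {r | (∃ i j : Fin (n - 1), (j : ℕ) = (i : ℕ) + 1 ∧
        r = .of i * .of j * .of i * (.of j * .of i * .of j)⁻¹) ∨
       (∃ i j : Fin (n - 1), (i : ℕ) + 2 ≤ (j : ℕ) ∧
        r = .of i * .of j * (.of j * .of i)⁻¹)}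

/-- The braid group `B_n`. -/
abbrev BraidGroup (n : ℕ) := PresentedGroup (braidRels n)

/-- The Artin generator `σ_{k+1}` (0-based index `k`). -/
def braidGen {n : ℕ} (i : Fin (n - 1)) : BraidGroup n := PresentedGroup.of i

/-- The strand index `k`, viewed inside `Fin n`. -/
def lo {n : ℕ} (k : Fin (n - 1)) : Fin n := ⟨k, by have := k.isLt; omega⟩

/-- The strand index `k + 1`, viewed inside `Fin n`. -/
def hi {n : ℕ} (k : Fin (n - 1)) : Fin n := ⟨(k : ℕ) + 1, by have := k.isLt; omega⟩

/-- The action of `S_n` on `n × n` integer matrices, simultaneously permuting rows and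
columns: `(π·M)[i,j] = M[π⁻¹ i, π⁻¹ j]`. -/
def matPermAct (n : ℕ) :
    Equiv.Perm (Fin n) →* MulAut (Multiplicative (Matrix (Fin n) (Fin n) ℤ)) where
  toFun π :=
    { toFun := fun M => Multiplicative.ofAdd fun i j => Multiplicative.toAdd M (π⁻¹ i) (π⁻¹ j)
      invFun := fun M => Multiplicative.ofAdd fun i j => Multiplicative.toAdd M (π i) (π j)
      left_inv := fun M => by
        funext i j
        exact congrArg₂ (Multiplicative.toAdd M) (π.symm_apply_apply i) (π.symm_apply_apply j)
      right_inv := fun M => by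
        funext i j
        exact congrArg₂ (Multiplicative.toAdd M) (π.apply_symm_apply i) (π.apply_symm_apply j)
      map_mul' := fun M M' => rfl }
  map_one' := by ext M; simp
  map_mul' := fun π ρ => by
    ext M
    rfl

/-- The semidirect product `Mat_n(ℤ) ⋊ S_n`. -/
abbrev SGEGroup (n : ℕ) :=
  SemidirectProduct (Multiplicative (Matrix (Fin n) (Fin n) ℤ)) (Equiv.Perm (Fin n))
    (matPermAct n)

/-- The value `(O_{k,k+1}, (k, k+1))` of the super-Gauss-Epple homomorphism on the
generator `σ_k`, where `O_{i,j}` is the matrix with a single `1` entry at `(i,j)`. -/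
def sgeGen {n : ℕ} (k : Fin (n - 1)) : SGEGroup n :=
  ⟨Multiplicative.ofAdd (Matrix.single (lo k) (hi k) 1), Equiv.swap (lo k) (hi k)⟩

/-!
`M - Mᵀ` is the inversion matrix of `π`: its `(i, j)` entry is `1` if `i < j` and `π` inverts
the pair, `-1` in the transposed position, and `0` otherwise. Both sides obey the same cocycle
rule under multiplication in `Mat_n(ℤ) ⋊ S_n` and they agree on the generators `SGE(σ_k)`, so
they agree on the whole image of `SGE`.
-/

section InversionMatrix

variable {α : Type*} [LinearOrder α]

/-- Pairs are tested through `π⁻¹`, matching the action `(π·M)[i,j] = M[π⁻¹ i, π⁻¹ j]`. -/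
def inversionMatrix (π : Equiv.Perm α) : Matrix α α ℤ :=
  Matrix.of fun i j =>
    if i < j ∧ π⁻¹ j < π⁻¹ i then 1 else if j < i ∧ π⁻¹ i < π⁻¹ j then -1 else 0

@[simp]
lemma inversionMatrix_one : inversionMatrix (1 : Equiv.Perm α) = 0 := by
  ext i j
  simp only [inversionMatrix, Matrix.of_apply, inv_one, Equiv.Perm.one_apply, Matrix.zero_apply]
  grind

lemma inversionMatrix_mul_apply (π ρ : Equiv.Perm α) (i j : α) :
    inversionMatrix (π * ρ) i j = inversionMatrix π i j + inversionMatrix ρ (π⁻¹ i) (π⁻¹ j) := by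
  have hπ : π⁻¹ i = π⁻¹ j ↔ i = j := (Equiv.injective _).eq_iff
  have hρ : ρ⁻¹ (π⁻¹ i) = ρ⁻¹ (π⁻¹ j) ↔ π⁻¹ i = π⁻¹ j := (Equiv.injective _).eq_iff
  simp only [inversionMatrix, Matrix.of_apply, mul_inv_rev, Equiv.Perm.mul_apply]
  grind

lemma inversionMatrix_inv_apply (π : Equiv.Perm α) (i j : α) :
    inversionMatrix π⁻¹ i j = -inversionMatrix π (π i) (π j) := by
  have h := inversionMatrix_mul_apply π π⁻¹ (π i) (π j)
  simp only [mul_inv_cancel, inversionMatrix_one, Equiv.Perm.coe_inv, Equiv.symm_apply_apply,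
    Matrix.zero_apply] at h
  omega

lemma inversionMatrix_apply_of_lt (π : Equiv.Perm α) {i j : α} (hij : i < j) :
    inversionMatrix π i j = if π⁻¹ j < π⁻¹ i then 1 else 0 := by
  simp [inversionMatrix, hij, hij.not_gt]

lemma inversionMatrix_swap_of_covBy {a b : α} (h : a ⋖ b) :
    inversionMatrix (Equiv.swap a b) = Matrix.single a b 1 - Matrix.single b a 1 := by
  have hab : a < b := h.lt
  have hbetween : ∀ c, a < c → ¬c < b := fun _ => @h.2 _
  ext i j
  simp only [inversionMatrix, Matrix.of_apply, Equiv.swap_inv, Equiv.swap_apply_def,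
    Matrix.sub_apply, Matrix.single_apply]
  grind

end InversionMatrix

lemma lo_covBy_hi {n : ℕ} (k : Fin (n - 1)) : lo k ⋖ hi k := by
  refine ⟨?_, fun c h₁ h₂ => ?_⟩ <;> simp only [lo, hi, Fin.lt_def] at * <;> omega

namespace SGEGroup

variable {n : ℕ}

lemma toAdd_mul_left_apply (a b : SGEGroup n) (i j : Fin n) :
    Multiplicative.toAdd (a * b).left i j =
      Multiplicative.toAdd a.left i j + Multiplicative.toAdd b.left (a.right⁻¹ i) (a.right⁻¹ j) :=
  rfl

lemma toAdd_inv_left_apply (a : SGEGroup n) (i j : Fin n) :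
    Multiplicative.toAdd a⁻¹.left i j = -Multiplicative.toAdd a.left (a.right i) (a.right j) := by
  show Multiplicative.toAdd (matPermAct n a.right⁻¹ a.left⁻¹) i j = _
  simp only [matPermAct, Equiv.Perm.coe_inv, MonoidHom.coe_mk, OneHom.coe_mk, MulEquiv.coe_mk,
    Equiv.coe_fn_mk, toAdd_inv, Matrix.neg_apply]
  rfl

open Matrix in
def skewPart (g : SGEGroup n) : Matrix (Fin n) (Fin n) ℤ :=
  Multiplicative.toAdd g.left - (Multiplicative.toAdd g.left)ᵀ

def skewPartEqInversionSubgroup (n : ℕ) : Subgroup (SGEGroup n) where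
  carrier := {g | skewPart g = inversionMatrix g.right}
  one_mem' := by
    ext i j
    simp [skewPart]
  mul_mem' := by
    intro a b ha hb
    ext i j
    have hai := congrFun₂ ha i j
    have hbi := congrFun₂ hb (a.right⁻¹ i) (a.right⁻¹ j)
    simp only [skewPart, Matrix.sub_apply, Matrix.transpose_apply] at hai hbi ⊢
    rw [toAdd_mul_left_apply, toAdd_mul_left_apply, SemidirectProduct.mul_right,
      inversionMatrix_mul_apply]
    omega
  inv_mem' := by
    intro a ha
    ext i j
    have hai := congrFun₂ ha (a.right i) (a.right j)
    simp only [skewPart, Matrix.sub_apply, Matrix.transpose_apply] at hai ⊢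
    rw [toAdd_inv_left_apply, toAdd_inv_left_apply, SemidirectProduct.inv_right,
      inversionMatrix_inv_apply]
    omega

lemma sgeGen_mem_skewPartEqInversionSubgroup (k : Fin (n - 1)) :
    sgeGen k ∈ skewPartEqInversionSubgroup n := by
  change Matrix.single (lo k) (hi k) 1 - (Matrix.single (lo k) (hi k) 1).transpose =
    inversionMatrix (Equiv.swap (lo k) (hi k))
  rw [inversionMatrix_swap_of_covBy (lo_covBy_hi k), Matrix.transpose_single]

end SGEGroup

open SGEGroup in
lemma range_le_skewPartEqInversionSubgroup {n : ℕ} (SGE : BraidGroup n →* SGEGroup n)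
    (hSGE : ∀ k : Fin (n - 1), SGE (braidGen k) = sgeGen k) :
    SGE.range ≤ skewPartEqInversionSubgroup n := by
  rw [MonoidHom.range_eq_map, ← PresentedGroup.closure_range_of, MonoidHom.map_closure,
    Subgroup.closure_le, ← Set.range_comp]
  rintro _ ⟨k, rfl⟩
  change SGE (braidGen k) ∈ _
  exact hSGE k ▸ sgeGen_mem_skewPartEqInversionSubgroup k

open Matrix in
theorem SGE_skew_entries_zero_one_general (n : ℕ)
    (SGE : BraidGroup n →* SGEGroup n)
    (hSGE : ∀ k : Fin (n - 1), SGE (braidGen k) = sgeGen k)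
    (β : BraidGroup n) (i j : Fin n) (hij : i < j) :
    (Multiplicative.toAdd (SGE β).left - (Multiplicative.toAdd (SGE β).left)ᵀ) i j
      ∈ ({0, 1} : Set ℤ) := by
  have hskew : SGEGroup.skewPart (SGE β) = inversionMatrix (SGE β).right :=
    range_le_skewPartEqInversionSubgroup SGE hSGE ⟨β, rfl⟩
  change SGEGroup.skewPart (SGE β) i j ∈ _
  rw [hskew, inversionMatrix_apply_of_lt _ hij]
  split_ifs <;> simp

open Matrix in
/-- For every braid `β`, writing `SGE(β) = (M, π)`, every entry of `M - Mᵀ` above the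
diagonal lies in `{0, 1}`. -/
theorem SGE_skew_entries_zero_one (n : ℕ) (hn : 2 ≤ n)
    (SGE : BraidGroup n →* SGEGroup n)
    (hSGE : ∀ k : Fin (n - 1), SGE (braidGen k) = sgeGen k)
    (β : BraidGroup n) (i j : Fin n) (hij : i < j) :
    (Multiplicative.toAdd (SGE β).left - (Multiplicative.toAdd (SGE β).left)ᵀ) i j
      ∈ ({0, 1} : Set ℤ) :=
  SGE_skew_entries_zero_one_general n SGE hSGE β i j hij
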